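/- arXiv:2112.02543 — 5 statements merged into one kernel-verified Lean document; each statement's English description precedes it below -/
import Mathlib

section
/- Let E be a real inner product space, let 0 < μ ≤ L, let F : E → ℝ and G : E → E satisfy both the L-smoothness inequality F(v) ≤ F(w) + ⟪v − w, G(w)⟫ + (L/2)·‖v − w‖² and the μ-strong-convexity inequality F(v) ≥ F(w) + ⟪v − w, G(w)⟫ + (μ/2)·‖v − w‖² for all v, w ∈ E, and let θ* ∈ E be a global minimizer of F. Then for every θ ∈ E and every step size η with 0 < η ≤ 1/L, one has ‖θ − η·G(θ) − θ*‖² ≤ (1 − μη)·‖θ − θ*‖². -/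
open RealInnerProductSpace

theorem gradient_step_contraction
    {E : Type*} [NormedAddCommGroup E] [InnerProductSpace ℝ E]
    (μ L : ℝ) (hμ : 0 < μ) (hμL : μ ≤ L) (F : E → ℝ) (G : E → E)
    (hsmooth : ∀ v w : E, F v ≤ F w + ⟪v - w, G w⟫ + (L / 2) * ‖v - w‖ ^ 2)
    (hconvex : ∀ v w : E, F v ≥ F w + ⟪v - w, G w⟫ + (μ / 2) * ‖v - w‖ ^ 2)
    (θstar : E) (hmin : ∀ v : E, F θstar ≤ F v) :
    ∀ (θ : E) (η : ℝ), 0 < η → η ≤ 1 / L →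
      ‖θ - η • G θ - θstar‖ ^ 2 ≤ (1 - μ * η) * ‖θ - θstar‖ ^ 2 := by
  intro θ η hη hηL
  have hL : 0 < L := lt_of_lt_of_le hμ hμL
  have hηL' : η * L ≤ 1 := (le_div_iff₀ hL).mp hηL
  -- strong convexity at θ*
  have h1 := hconvex θstar θ
  have hsub : θstar - θ = -(θ - θstar) := by abel
  rw [hsub, inner_neg_left, norm_neg] at h1
  -- descent lemma with step 1/L
  have h2 := hsmooth (θ - (1 / L) • G θ) θ
  have hsub2 : θ - (1 / L) • G θ - θ = -((1 / L) • G θ) := by abel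
  rw [hsub2, inner_neg_left, real_inner_smul_left, real_inner_self_eq_norm_sq,
    norm_neg, norm_smul, Real.norm_eq_abs, abs_of_pos (by positivity : (0:ℝ) < 1 / L)] at h2
  have h3 := hmin (θ - (1 / L) • G θ)
  -- expansion of the squared norm
  have hexp : ‖θ - η • G θ - θstar‖ ^ 2
      = ‖θ - θstar‖ ^ 2 - 2 * η * ⟪θ - θstar, G θ⟫ + η ^ 2 * ‖G θ‖ ^ 2 := by
    have : θ - η • G θ - θstar = (θ - θstar) - η • G θ := by abel
    rw [this, norm_sub_sq_real, real_inner_smul_right, norm_smul, Real.norm_eq_abs,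
      abs_of_pos hη]
    ring
  rw [hexp]
  have hLne : L ≠ 0 := ne_of_gt hL
  have key : -(1 / L * ‖G θ‖ ^ 2) + L / 2 * (1 / L * ‖G θ‖) ^ 2
      = -(‖G θ‖ ^ 2 / (2 * L)) := by field_simp; ring
  have h2' : F (θ - (1 / L) • G θ) ≤ F θ - ‖G θ‖ ^ 2 / (2 * L) := by linarith
  have hG2 : ‖G θ‖ ^ 2 ≤ 2 * L * (F θ - F θstar) := by
    have h4 : ‖G θ‖ ^ 2 / (2 * L) ≤ F θ - F θstar := by linarith
    calc ‖G θ‖ ^ 2 = 2 * L * (‖G θ‖ ^ 2 / (2 * L)) := by field_simp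
      _ ≤ 2 * L * (F θ - F θstar) := by
          exact mul_le_mul_of_nonneg_left h4 (by positivity)
  have hΔ : 0 ≤ F θ - F θstar := by linarith [hmin θ]
  nlinarith [mul_le_mul_of_nonneg_left hG2 (by positivity : (0:ℝ) ≤ η ^ 2),
    mul_nonneg (mul_nonneg (sub_nonneg.mpr hηL') hΔ) hη.le,
    mul_le_mul_of_nonneg_left h1 (le_of_lt hη)]
end

section
/- Let E be a real inner product space (e.g. Euclidean space ℝⁿ), and let (Ω, 𝒜, ℙ) be a probability space. Let 0 < μ ≤ L and B ≥ 0, let F : E → ℝ and G : E → E satisfy both the L-smoothness inequality F(v) ≤ F(w) + ⟪v − w, G(w)⟫ + (L/2)·‖v − w‖² and the μ-strong-convexity inequality F(v) ≥ F(w) + ⟪v − w, G(w)⟫ + (μ/2)·‖v − w‖² for all v, w ∈ E, and let θ* ∈ E be a global minimizer of F. Let θ ∈ E, let f : Ω → E be Bochner square-integrable with mean ∫ f dℙ = G(θ) and variance ∫ ‖f(ω) − G(θ)‖² dℙ(ω) ≤ B, and let 0 < η ≤ 1/L. Then ∫ ‖θ − η·f(ω) − θ*‖² dℙ(ω) ≤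 (1 − μη)·‖θ − θ*‖² + η²·B. -/
/-!
Write `g = G θ`. Since `f` has mean `g`, the squared distance after the stochastic step splits
into the squared distance after the exact gradient step plus `η²` times the variance of `f`.
For the exact step, strong convexity gives `⟪θ - θ*, g⟫ ≥ F θ - F θ* + (μ/2)‖θ - θ*‖²`, while a
gradient step of length `1/L` from `θ` and smoothness give `‖g‖² ≤ 2L (F θ - F θ*)`; with
`ηL ≤ 1` the term `η²‖g‖²` is then absorbed by `2η (F θ - F θ*)`.
-/

open RealInnerProductSpace MeasureTheory

section Deterministic

variable {E : Type*} [NormedAddCommGroup E] [InnerProductSpace ℝ E]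

def IsSmoothWithGradient (L : ℝ) (F : E → ℝ) (G : E → E) : Prop :=
  ∀ v w : E, F v ≤ F w + ⟪v - w, G w⟫ + (L / 2) * ‖v - w‖ ^ 2

def IsStronglyConvexWithGradient (μ : ℝ) (F : E → ℝ) (G : E → E) : Prop :=
  ∀ v w : E, F v ≥ F w + ⟪v - w, G w⟫ + (μ / 2) * ‖v - w‖ ^ 2

variable {F : E → ℝ} {G : E → E} {θstar : E}

theorem IsSmoothWithGradient.norm_sq_le {L : ℝ} (hsmooth : IsSmoothWithGradient L F G)
    (hL : 0 < L) (hmin : ∀ v, F θstar ≤ F v) (w : E) :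
    ‖G w‖ ^ 2 ≤ 2 * L * (F w - F θstar) := by
  have hstep := hsmooth (w - L⁻¹ • G w) w
  rw [sub_sub_cancel_left, inner_neg_left, real_inner_smul_left, real_inner_self_eq_norm_sq,
    norm_neg, norm_smul, Real.norm_of_nonneg (inv_nonneg.mpr hL.le), mul_pow] at hstep
  have hdescent : F θstar ≤ F w - ‖G w‖ ^ 2 / (2 * L) := by
    calc F θstar ≤ F (w - L⁻¹ • G w) := hmin _
      _ ≤ _ := hstep
      _ = F w - ‖G w‖ ^ 2 / (2 * L) := by field_simp; ring
  have hdiv : ‖G w‖ ^ 2 / (2 * L) ≤ F w - F θstar := by linarith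
  rwa [div_le_iff₀ (by positivity), mul_comm] at hdiv

theorem IsStronglyConvexWithGradient.sub_add_le_inner {μ : ℝ}
    (hconvex : IsStronglyConvexWithGradient μ F G) (w z : E) :
    F w - F z + (μ / 2) * ‖w - z‖ ^ 2 ≤ ⟪w - z, G w⟫ := by
  have h := hconvex z w
  rw [← neg_sub w z, inner_neg_left, norm_neg] at h
  linarith

theorem norm_sub_smul_gradient_sub_sq_le {μ L η : ℝ} (hsmooth : IsSmoothWithGradient L F G)
    (hconvex : IsStronglyConvexWithGradient μ F G) (hmin : ∀ v, F θstar ≤ F v)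
    (hL : 0 < L) (hη : 0 ≤ η) (hηL : η * L ≤ 1) (w : E) :
    ‖w - θstar - η • G w‖ ^ 2 ≤ (1 - μ * η) * ‖w - θstar‖ ^ 2 := by
  have hgrad := hsmooth.norm_sq_le hL hmin w
  have hinner := hconvex.sub_add_le_inner w θstar
  have hgap : 0 ≤ F w - F θstar := sub_nonneg.mpr (hmin w)
  have habsorb : η ^ 2 * ‖G w‖ ^ 2 ≤ 2 * η * (F w - F θstar) := by
    calc η ^ 2 * ‖G w‖ ^ 2 ≤ η ^ 2 * (2 * L * (F w - F θstar)) := by gcongr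
      _ = 2 * η * (η * L) * (F w - F θstar) := by ring
      _ ≤ 2 * η * 1 * (F w - F θstar) := by gcongr
      _ = 2 * η * (F w - F θstar) := by ring
  rw [norm_sub_sq_real, real_inner_smul_right, norm_smul, Real.norm_eq_abs, mul_pow, sq_abs]
  nlinarith [mul_le_mul_of_nonneg_left hinner hη]

end Deterministic

section BiasVariance

variable {E : Type*} [NormedAddCommGroup E] [InnerProductSpace ℝ E] [CompleteSpace E]
  {Ω : Type*} [MeasurableSpace Ω] {ℙ : Measure Ω} [IsProbabilityMeasure ℙ]

theorem integral_norm_add_sq_of_integral_eq_zero {Y : Ω → E} (hY : MemLp Y 2 ℙ)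
    (hmean : ∫ ω, Y ω ∂ℙ = 0) (c : E) :
    ∫ ω, ‖c + Y ω‖ ^ 2 ∂ℙ = ‖c‖ ^ 2 + ∫ ω, ‖Y ω‖ ^ 2 ∂ℙ := by
  have hYint : Integrable Y ℙ := hY.integrable one_le_two
  have hcross : Integrable (fun ω ↦ 2 * ⟪c, Y ω⟫) ℙ := (hYint.const_inner c).const_mul 2
  have hlinear : Integrable (fun ω ↦ ‖c‖ ^ 2 + 2 * ⟪c, Y ω⟫) ℙ := (integrable_const _).add hcross
  have hsq : Integrable (fun ω ↦ ‖Y ω‖ ^ 2) ℙ := hY.integrable_norm_pow two_ne_zero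
  simp_rw [norm_add_sq_real]
  rw [integral_add hlinear hsq, integral_add (integrable_const _) hcross,
    integral_const_mul, integral_inner hYint, hmean, inner_zero_right]
  simp

theorem integral_norm_sub_smul_sq {f : Ω → E} {m : E} (hf : MemLp f 2 ℙ)
    (hmean : ∫ ω, f ω ∂ℙ = m) (x : E) (η : ℝ) :
    ∫ ω, ‖x - η • f ω‖ ^ 2 ∂ℙ = ‖x - η • m‖ ^ 2 + η ^ 2 * ∫ ω, ‖f ω - m‖ ^ 2 ∂ℙ := by
  have hcentered : ∫ ω, η • (m - f ω) ∂ℙ = 0 := by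
    rw [integral_smul, integral_sub (integrable_const m) (hf.integrable one_le_two), hmean,
      integral_const, probReal_univ, one_smul, sub_self, smul_zero]
  have hsplit (ω : Ω) : x - η • f ω = (x - η • m) + η • (m - f ω) := by
    rw [smul_sub]; abel
  have hcenteredLp : MemLp (fun ω ↦ η • (m - f ω)) 2 ℙ := ((memLp_const m).sub hf).const_smul η
  simp_rw [hsplit]
  rw [integral_norm_add_sq_of_integral_eq_zero hcenteredLp hcentered, ← integral_const_mul]
  simp_rw [norm_smul, mul_pow, Real.norm_eq_abs, sq_abs, norm_sub_rev m]

end BiasVariance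

theorem per_round_global_model_progress_general
    {E : Type*} [NormedAddCommGroup E] [InnerProductSpace ℝ E] [CompleteSpace E]
    {Ω : Type*} [MeasurableSpace Ω] (ℙ : Measure Ω) [IsProbabilityMeasure ℙ]
    (μ L B : ℝ)
    (F : E → ℝ) (G : E → E)
    (hsmooth : ∀ v w : E, F v ≤ F w + ⟪v - w, G w⟫ + (L / 2) * ‖v - w‖ ^ 2)
    (hconvex : ∀ v w : E, F v ≥ F w + ⟪v - w, G w⟫ + (μ / 2) * ‖v - w‖ ^ 2)
    (θstar : E) (hmin : ∀ v : E, F θstar ≤ F v)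
    (θ : E) (f : Ω → E) (hf : MemLp f 2 ℙ)
    (hmean : ∫ ω, f ω ∂ℙ = G θ)
    (hvar : ∫ ω, ‖f ω - G θ‖ ^ 2 ∂ℙ ≤ B)
    (η : ℝ) (hη : 0 < η) (hηL : η ≤ 1 / L) :
    ∫ ω, ‖θ - η • f ω - θstar‖ ^ 2 ∂ℙ ≤ (1 - μ * η) * ‖θ - θstar‖ ^ 2 + η ^ 2 * B := by
  have hL : 0 < L := one_div_pos.mp (hη.trans_le hηL)
  have hcontract := norm_sub_smul_gradient_sub_sq_le (θstar := θstar) hsmooth hconvex hmin hL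
    hη.le ((le_div_iff₀ hL).mp hηL) θ
  calc ∫ ω, ‖θ - η • f ω - θstar‖ ^ 2 ∂ℙ = ∫ ω, ‖(θ - θstar) - η • f ω‖ ^ 2 ∂ℙ := by
        simp_rw [sub_right_comm θ]
    _ = ‖θ - θstar - η • G θ‖ ^ 2 + η ^ 2 * ∫ ω, ‖f ω - G θ‖ ^ 2 ∂ℙ :=
        integral_norm_sub_smul_sq hf hmean _ η
    _ ≤ (1 - μ * η) * ‖θ - θstar‖ ^ 2 + η ^ 2 * B := by gcongr

theorem per_round_global_model_progress
    {E : Type*} [NormedAddCommGroup E] [InnerProductSpace ℝ E] [CompleteSpace E]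
    {Ω : Type*} [MeasurableSpace Ω] (ℙ : Measure Ω) [IsProbabilityMeasure ℙ]
    (μ L B : ℝ) (hμ : 0 < μ) (hμL : μ ≤ L) (hB : 0 ≤ B)
    (F : E → ℝ) (G : E → E)
    (hsmooth : ∀ v w : E, F v ≤ F w + ⟪v - w, G w⟫ + (L / 2) * ‖v - w‖ ^ 2)
    (hconvex : ∀ v w : E, F v ≥ F w + ⟪v - w, G w⟫ + (μ / 2) * ‖v - w‖ ^ 2)
    (θstar : E) (hmin : ∀ v : E, F θstar ≤ F v)
    (θ : E) (f : Ω → E) (hf : MemLp f 2 ℙ)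
    (hmean : ∫ ω, f ω ∂ℙ = G θ)
    (hvar : ∫ ω, ‖f ω - G θ‖ ^ 2 ∂ℙ ≤ B)
    (η : ℝ) (hη : 0 < η) (hηL : η ≤ 1 / L) :
    ∫ ω, ‖θ - η • f ω - θstar‖ ^ 2 ∂ℙ ≤ (1 - μ * η) * ‖θ - θstar‖ ^ 2 + η ^ 2 * B :=
  per_round_global_model_progress_general ℙ μ L B F G hsmooth hconvex θstar hmin θ f hf hmean hvar η
    hη hηL
end

section
/- Let 0 < μ ≤ L, B ≥ 0, and set κ = L/μ. For t ≥ 1 let η_t = 2/(μ·t + 2L − μ). Let Δ : {1, 2, 3, …} → ℝ be a sequence with Δ(t) ≥ 0 for all t, satisfying the recursion Δ(t+1) ≤ (1 − μ·η_t)·Δ(t) + η_t²·B for all t ≥ 1. Then for every t ≥ 1: Δ(t) ≤ v/(t + 2κ − 1), where v = max{2κ·Δ(1), 4B/μ²}. -/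
theorem convergence_induction_bound
    (μ L B : ℝ) (hμ : 0 < μ) (hμL : μ ≤ L) (hB : 0 ≤ B)
    (κ : ℝ) (hκ : κ = L / μ)
    (η : ℕ → ℝ) (hη : ∀ t : ℕ, 1 ≤ t → η t = 2 / (μ * t + 2 * L - μ))
    (Δ : ℕ → ℝ) (hΔnonneg : ∀ t, 0 ≤ Δ t)
    (hrec : ∀ t : ℕ, 1 ≤ t → Δ (t + 1) ≤ (1 - μ * η t) * Δ t + (η t) ^ 2 * B)
    (v : ℝ) (hv : v = max (2 * κ * Δ 1) (4 * B / μ ^ 2)) :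
    ∀ t : ℕ, 1 ≤ t → Δ t ≤ v / (t + 2 * κ - 1) := by
  have hκ1 : (1:ℝ) ≤ κ := by rw [hκ]; exact (one_le_div hμ).2 hμL
  have hv0 : 0 ≤ v := le_trans (by positivity) (hv ▸ le_max_right (2 * κ * Δ 1) (4 * B / μ ^ 2))
  intro t ht
  induction t, ht using Nat.le_induction with
  | base =>
    have hκ0 : (0:ℝ) < 2 * κ := by linarith
    have h : ((1:ℕ):ℝ) + 2 * κ - 1 = 2 * κ := by push_cast; ring
    rw [h, le_div_iff₀ hκ0]
    have := hv ▸ le_max_left (2 * κ * Δ 1) (4 * B / μ ^ 2)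
    linarith
  | succ t ht ih =>
    set a : ℝ := (t:ℝ) + 2 * κ - 1 with ha_def
    have ht1 : (1:ℝ) ≤ (t:ℝ) := by exact_mod_cast ht
    have ha2 : (2:ℝ) ≤ a := by rw [ha_def]; linarith
    have ha0 : (0:ℝ) < a := by linarith
    have hden : μ * t + 2 * L - μ = μ * a := by
      rw [ha_def, hκ]; field_simp
    have hηt : η t = 2 / (μ * a) := by rw [hη t ht, hden]
    have hcoef : 0 ≤ 1 - 2 / a := by
      rw [sub_nonneg, div_le_one ha0]; exact ha2
    have h2 : 4 * B / μ ^ 2 ≤ v := hv ▸ le_max_right _ _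
    have hgoal : ((t:ℝ) + 1) + 2 * κ - 1 = a + 1 := by rw [ha_def]; ring
    have key : Δ (t + 1) ≤ v / (a + 1) := by
      calc Δ (t + 1) ≤ (1 - μ * η t) * Δ t + (η t) ^ 2 * B := hrec t ht
        _ = (1 - 2 / a) * Δ t + (4 * B / μ ^ 2) / a ^ 2 := by
            rw [hηt]; field_simp; ring
        _ ≤ (1 - 2 / a) * (v / a) + (4 * B / μ ^ 2) / a ^ 2 := by
            have := ih
            gcongr
        _ ≤ (1 - 2 / a) * (v / a) + v / a ^ 2 := by gcongr
        _ = ((a - 1) * v) / a ^ 2 := by field_simp; ring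
        _ ≤ v / (a + 1) := by
            rw [div_le_div_iff₀ (by positivity) (by linarith)]
            nlinarith [hv0, ha0]
    calc Δ (t + 1) ≤ v / (a + 1) := key
      _ = v / (((t:ℝ) + 1) + 2 * κ - 1) := by rw [hgoal]
      _ = v / ((((t+1:ℕ)):ℝ) + 2 * κ - 1) := by push_cast; ring_nf
end

section
/- Let c > 0, P > 0, and u' > 0, and consider the function D̃(λ) = c/(λ·P/u' − (1 − λ)·P) + c·u'/((1 − λ)·P) on the open interval I = (u'/(1+u'), 1) (on which both denominators are positive). Then D̃ attains a unique global minimum on I at λ* = (u' + √(1+u')) / (1 + u' + √(1+u')) = 1 − 1/(1 + u' + √(1+u')); that is, λ* ∈ I and for every λ ∈ I with λ ≠ λ*, D̃(λ*) < D̃(λ). -/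
theorem optimal_sc_power_allocation
    (c P u' : ℝ) (hc : 0 < c) (hP : 0 < P) (hu' : 0 < u')
    (D : ℝ → ℝ)
    (hD : ∀ lam : ℝ, D lam = c / (lam * P / u' - (1 - lam) * P) + c * u' / ((1 - lam) * P))
    (lamStar : ℝ)
    (hlam : lamStar = (u' + Real.sqrt (1 + u')) / (1 + u' + Real.sqrt (1 + u'))) :
    lamStar ∈ Set.Ioo (u' / (1 + u')) 1 ∧
      ∀ lam ∈ Set.Ioo (u' / (1 + u')) (1 : ℝ), lam ≠ lamStar → D lamStar < D lam := by
  set t := Real.sqrt (1 + u') with htdef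
  have ht2 : t ^ 2 = 1 + u' := Real.sq_sqrt (by linarith)
  have ht0 : 0 < t := Real.sqrt_pos.mpr (by linarith)
  have ht1 : 1 < t := by nlinarith
  have hs : (0:ℝ) < 1 + u' := by linarith
  have hden : (0:ℝ) < 1 + u' + t := by linarith
  -- membership
  have hmemStar : lamStar ∈ Set.Ioo (u' / (1 + u')) 1 := by
    rw [hlam]
    constructor
    · rw [div_lt_div_iff₀ hs hden]; nlinarith
    · rw [div_lt_one hden]; linarith
  refine ⟨hmemStar, ?_⟩
  -- closed form for D on the interval, in terms of a = (1+u')λ - u'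
  have hDval : ∀ lam : ℝ, u' / (1 + u') < lam → lam < 1 →
      D lam = c * u' / P *
        (1 / ((1 + u') * lam - u') + t ^ 2 / (1 - ((1 + u') * lam - u'))) := by
    intro lam h1 h2
    have ha : 0 < (1 + u') * lam - u' := by
      rw [div_lt_iff₀ hs] at h1; nlinarith
    have hb : 0 < 1 - lam := by linarith
    have ha1 : 1 - ((1 + u') * lam - u') = (1 + u') * (1 - lam) := by ring
    rw [hD, ht2, ha1]
    have hd1 : lam * P / u' - (1 - lam) * P = P * ((1 + u') * lam - u') / u' := by
      field_simp; ring
    rw [hd1]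
    field_simp
  -- the general lower-bound identity in the variable a
  have hg : ∀ a : ℝ, a ≠ 0 → 1 - a ≠ 0 →
      1 / a + t ^ 2 / (1 - a) = (1 + t) ^ 2 + ((1 + t) * a - 1) ^ 2 / (a * (1 - a)) := by
    intro a ha0 ha1
    field_simp
    ring
  intro lam hmem hne
  obtain ⟨h1, h2⟩ := hmem
  rw [hDval lam h1 h2, hDval lamStar hmemStar.1 hmemStar.2]
  have hK : 0 < c * u' / P := by positivity
  rw [mul_lt_mul_iff_right₀ hK]
  have ha : 0 < (1 + u') * lam - u' := by
    rw [div_lt_iff₀ hs] at h1; nlinarith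
  have ha' : (1 + u') * lam - u' < 1 := by nlinarith
  have haS : 0 < (1 + u') * lamStar - u' := by
    have := hmemStar.1; rw [div_lt_iff₀ hs] at this; nlinarith
  have haS' : (1 + u') * lamStar - u' < 1 := by nlinarith [hmemStar.2]
  rw [hg _ (ne_of_gt ha) (by linarith), hg _ (ne_of_gt haS) (by linarith)]
  -- at lamStar the square vanishes
  have hvan : (1 + t) * ((1 + u') * lamStar - u') - 1 = 0 := by
    rw [hlam]
    field_simp
    linear_combination ht2
  have hne' : (1 + t) * ((1 + u') * lam - u') - 1 ≠ 0 := by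
    intro h
    apply hne
    have h' : t * (lam * (1 + u' + t) - (u' + t)) = 0 := by
      linear_combination h + (lam - 1) * ht2
    have h'' : lam * (1 + u' + t) - (u' + t) = 0 :=
      (mul_eq_zero.mp h').resolve_left ht0.ne'
    rw [hlam, eq_div_iff hden.ne']
    linarith
  have hpos : 0 < ((1 + t) * ((1 + u') * lam - u') - 1) ^ 2
      / (((1 + u') * lam - u') * (1 - ((1 + u') * lam - u'))) := by
    apply div_pos (by positivity) (by nlinarith)
  rw [hvan]
  simp only [ne_eq, zero_pow, OfNat.ofNat_ne_zero, not_false_eq_true, zero_div]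
  linarith
end

section
/- Let 0 < μ ≤ L and B ≥ 0, and for t ≥ 1 let η_t = 2/(μ·t + 2L − μ). Let Δ : {1, 2, 3, …} → ℝ be a sequence with Δ(t) ≥ 0 for all t, satisfying Δ(t+1) ≤ (1 − μ·η_t)·Δ(t) + η_t²·B for all t ≥ 1. Then for every t ≥ 1: Δ(t) ≤ (2/μ) · (μ·L·Δ(1) + 2B) / (μ·t + 2L − μ). In particular Δ(t) → 0 as t → ∞. -/
open Filter Topology

/- With `d t = μ t + 2L - μ` the step size is `η t = 2 / d t` and `d (t + 1) = d t + μ`, so the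
bound `Δ t ≤ C / d t` propagates by induction as soon as `C` dominates both the initial error
(`2 L Δ 1 ≤ C`) and the noise (`4 B ≤ C μ`): the contraction `(1 - 2μ / d) C / d` gains
`2 μ C / d²` over `C / d`, which pays for both the noise term `4 B / d²` and the shift from
`d` to `d + μ`. Taking `C = 2 L Δ 1 + 4 B / μ` gives the bound, and it tends to `0`. -/

theorem recursion_step_le_div_add {μ B C d x : ℝ} (hμ : 0 < μ) (hd : 2 * μ ≤ d) (hB : 0 ≤ B)
    (hCB : 4 * B ≤ C * μ) (hx : x ≤ C / d) :
    (1 - μ * (2 / d)) * x + (2 / d) ^ 2 * B ≤ C / (d + μ) := by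
  have hd_pos : 0 < d := by linarith
  have hcontr : 0 ≤ 1 - μ * (2 / d) := by
    rw [sub_nonneg, mul_div_assoc', div_le_one hd_pos]
    linarith
  have hCμ : 0 ≤ C * μ := by linarith
  calc (1 - μ * (2 / d)) * x + (2 / d) ^ 2 * B
      ≤ (1 - μ * (2 / d)) * (C / d) + (2 / d) ^ 2 * B := by gcongr
    _ = ((d - 2 * μ) * C + 4 * B) / d ^ 2 := by field_simp; ring
    _ ≤ C / (d + μ) := by
      rw [div_le_div_iff₀ (by positivity) (by positivity)]
      nlinarith [mul_le_mul_of_nonneg_right hCB (by positivity : 0 ≤ d + μ),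
        mul_nonneg hCμ hμ.le]

theorem le_div_of_recursion {μ L B C : ℝ} {η Δ : ℕ → ℝ} (hμ : 0 < μ) (hμL : μ ≤ L) (hB : 0 ≤ B)
    (hCB : 4 * B ≤ C * μ) (hC₁ : 2 * L * Δ 1 ≤ C)
    (hη : ∀ t : ℕ, 1 ≤ t → η t = 2 / (μ * t + 2 * L - μ))
    (hrec : ∀ t : ℕ, 1 ≤ t → Δ (t + 1) ≤ (1 - μ * η t) * Δ t + (η t) ^ 2 * B) :
    ∀ t : ℕ, 1 ≤ t → Δ t ≤ C / (μ * t + 2 * L - μ) := by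
  intro t ht
  induction t, ht using Nat.le_induction with
  | base =>
    rw [Nat.cast_one, mul_one, add_sub_cancel_left, le_div_iff₀ (by linarith)]
    linarith
  | succ n hn ih =>
    have hd : 2 * μ ≤ μ * n + 2 * L - μ := by
      have : μ ≤ μ * n := le_mul_of_one_le_right hμ.le (by exact_mod_cast hn)
      linarith
    have hshift : μ * ((n + 1 : ℕ) : ℝ) + 2 * L - μ = (μ * n + 2 * L - μ) + μ := by
      push_cast; ring
    rw [hshift]
    exact (hη n hn ▸ hrec n hn).trans (recursion_step_le_div_add hμ hd hB hCB ih)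

theorem tendsto_const_div_affine_atTop (C : ℝ) {a : ℝ} (ha : 0 < a) (b c : ℝ) :
    Tendsto (fun t : ℕ => C / (a * t + b - c)) atTop (𝓝 0) := by
  refine tendsto_const_nhds.div_atTop ?_
  simp_rw [sub_eq_add_neg]
  exact tendsto_atTop_add_const_right _ _ <| tendsto_atTop_add_const_right _ _ <|
    tendsto_natCast_atTop_atTop.const_mul_atTop ha

theorem slimfl_distance_convergence
    (μ L B : ℝ) (hμ : 0 < μ) (hμL : μ ≤ L) (hB : 0 ≤ B)
    (η : ℕ → ℝ) (hη : ∀ t : ℕ, 1 ≤ t → η t = 2 / (μ * t + 2 * L - μ))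
    (Δ : ℕ → ℝ) (hΔnonneg : ∀ t, 0 ≤ Δ t)
    (hrec : ∀ t : ℕ, 1 ≤ t → Δ (t + 1) ≤ (1 - μ * η t) * Δ t + (η t) ^ 2 * B) :
    (∀ t : ℕ, 1 ≤ t →
      Δ t ≤ (2 / μ) * (μ * L * Δ 1 + 2 * B) / (μ * t + 2 * L - μ)) ∧
    Tendsto Δ atTop (nhds 0) := by
  set C := (2 / μ) * (μ * L * Δ 1 + 2 * B)
  have hC : C = 2 * L * Δ 1 + 4 * B / μ := by
    simp only [C]; field_simp; ring
  have hLΔ₁ : 0 ≤ μ * L * Δ 1 := mul_nonneg (mul_nonneg hμ.le (hμ.le.trans hμL)) (hΔnonneg 1)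
  have hCB : 4 * B ≤ C * μ := by
    rw [hC, add_mul, div_mul_cancel₀ _ hμ.ne']
    nlinarith
  have hC₁ : 2 * L * Δ 1 ≤ C := by
    rw [hC]
    exact le_add_of_nonneg_right (by positivity)
  have hbound := le_div_of_recursion hμ hμL hB hCB hC₁ hη hrec
  refine ⟨hbound, squeeze_zero' (Eventually.of_forall hΔnonneg) ?_
    (tendsto_const_div_affine_atTop C hμ (2 * L) μ)⟩
  filter_upwards [eventually_ge_atTop 1] with t ht using hbound t ht
end
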